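/- arXiv:1212.0744 — 2 statements merged into one kernel-verified Lean document; each statement's English description precedes it below -/
import Mathlib

section
/- Let n ≥ 1, α ∈ (0,1), p ∈ [1,∞), q ∈ [1,∞). For a nonempty set K ⊆ (0,∞)×ℝⁿ, the following are equivalent: (a) C_{p,q}^{(α)}(K) = 0; (b) there exists a measurable F : (0,∞)×ℝⁿ → [0,∞) with ‖F‖_{L^q_t L^p_x} < ∞ such that K ⊆ {(t,x) ∈ (0,∞)×ℝⁿ : S_α F(t,x) = ∞}. -/
open MeasureTheory ENNReal Set

noncomputable section

abbrev Rn (n : ℕ) := EuclideanSpace ℝ (Fin n)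

/-- The fractional heat kernel `K_t^{(α)}(x)`. -/
def fracKernel (n : ℕ) (α t : ℝ) (x : Rn n) : ℝ :=
  (2 * Real.pi) ^ (-(n : ℝ) / 2) *
    (∫ y : Rn n, Complex.exp (Complex.I * ((inner ℝ x y : ℝ) : ℂ) -
      ((t * ‖y‖ ^ (2 * α) : ℝ) : ℂ))).re

/-- The parabolic ball `B_r^{(α)}(t₀, x₀)` inside `(0,∞) × ℝⁿ`. -/
def pball (n : ℕ) (α : ℝ) (t₀ : ℝ) (x₀ : Rn n) (r : ℝ) : Set (ℝ × Rn n) :=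
  {z | 0 < z.1 ∧ |z.1 - t₀| < r ^ (2 * α) ∧ ‖z.2 - x₀‖ < r}

/-- The mixed norm `‖F‖_{L^q_t L^p_x}` (finite exponents). -/
def mixedNorm (n : ℕ) (q p : ℝ) (F : ℝ → Rn n → ℝ) : ℝ≥0∞ :=
  (∫⁻ t in Ioi (0 : ℝ), (∫⁻ x, ENNReal.ofReal |F t x| ^ p) ^ (q / p)) ^ (1 / q)

/-- `R_α f(t,x)`. -/
def Rop (n : ℕ) (α : ℝ) (f : Rn n → ℝ) (t : ℝ) (x : Rn n) : ℝ :=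
  ∫ y, fracKernel n α t (x - y) * f y

/-- `S_α F(t,x)` as a Bochner integral (real-valued). -/
def Sop (n : ℕ) (α : ℝ) (F : ℝ → Rn n → ℝ) (t : ℝ) (x : Rn n) : ℝ :=
  ∫ s in Ioc (0 : ℝ) t, ∫ y, fracKernel n α (t - s) (x - y) * F s y

/-- `S_α F(t,x)` valued in `[0,∞]`, for nonnegative `F`. -/
def SopE (n : ℕ) (α : ℝ) (F : ℝ → Rn n → ℝ) (t : ℝ) (x : Rn n) : ℝ≥0∞ :=
  ∫⁻ s in Ioc (0 : ℝ) t, ∫⁻ y,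
    ENNReal.ofReal (fracKernel n α (t - s) (x - y)) * ENNReal.ofReal (F s y)

/-- The `(α,p,q)`-capacity of a set `E ⊆ (0,∞) × ℝⁿ`. -/
def capacity (n : ℕ) (α p q : ℝ) (E : Set (ℝ × Rn n)) : ℝ≥0∞ :=
  ⨅ (F : ℝ → Rn n → ℝ) (_ : Measurable (Function.uncurry F))
    (_ : ∀ s y, 0 ≤ F s y) (_ : ∀ z ∈ E, 1 ≤ SopE n α F z.1 z.2),
    mixedNorm n q p F ^ min p q

/-- The `L^α`-based `(φ,ε)`-Hausdorff content. -/
def hContent (n : ℕ) (α : ℝ) (φ : ℝ → ℝ≥0∞) (ε : ℝ) (E : Set (ℝ × Rn n)) : ℝ≥0∞ :=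
  ⨅ (c : ℕ → ℝ × Rn n) (r : ℕ → ℝ) (_ : ∀ j, 0 < r j ∧ r j < ε)
    (_ : E ⊆ ⋃ j, pball n α (c j).1 (c j).2 (r j)), ∑' j, φ (r j)

/-- The `L^α`-based `φ`-Hausdorff measure (limit of contents as `ε → 0`). -/
def hMeasure (n : ℕ) (α : ℝ) (φ : ℝ → ℝ≥0∞) (E : Set (ℝ × Rn n)) : ℝ≥0∞ :=
  ⨆ (ε : ℝ) (_ : 0 < ε), hContent n α φ ε E

/-- The `L^α`-based parabolic Hausdorff dimension. -/
def pDimH (n : ℕ) (α : ℝ) (E : Set (ℝ × Rn n)) : ℝ :=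
  sInf {d : ℝ | 0 < d ∧ hMeasure n α (fun r => ENNReal.ofReal (r ^ d)) E = 0}

/-- Mixed norm with extended exponents (allowing `∞`). -/
def mixedNormE (n : ℕ) (q p : ℝ≥0∞) (F : ℝ → Rn n → ℝ) : ℝ≥0∞ :=
  if q = ∞ then essSup (fun t => eLpNorm (F t) p volume) (volume.restrict (Ioi 0))
  else (∫⁻ t in Ioi (0 : ℝ), eLpNorm (F t) p volume ^ q.toReal) ^ (1 / q.toReal)


section Helpers
open Filter Topology

lemma measurable_fracKernel (n : ℕ) (α : ℝ) (hα : 0 < α) :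
    Measurable (fun z : ℝ × Rn n => fracKernel n α z.1 z.2) := by
  have hcont : Continuous (fun w : (ℝ × Rn n) × Rn n =>
      Complex.exp (Complex.I * ((inner ℝ w.1.2 w.2 : ℝ) : ℂ) -
        ((w.1.1 * ‖w.2‖ ^ (2 * α) : ℝ) : ℂ))) := by
    refine Complex.continuous_exp.comp (Continuous.sub ?_ ?_)
    · exact continuous_const.mul (Complex.continuous_ofReal.comp
        (continuous_inner.comp ((continuous_snd.comp continuous_fst).prodMk continuous_snd)))
    · refine Complex.continuous_ofReal.comp (Continuous.mul
        (continuous_fst.comp continuous_fst) ?_)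
      exact (Real.continuous_rpow_const (by positivity)).comp (continuous_norm.comp continuous_snd)
  have hsm : StronglyMeasurable (fun z : ℝ × Rn n =>
      ∫ y : Rn n, Complex.exp (Complex.I * ((inner ℝ z.2 y : ℝ) : ℂ) -
        ((z.1 * ‖y‖ ^ (2 * α) : ℝ) : ℂ)) ∂volume) :=
    hcont.stronglyMeasurable.integral_prod_right'
  exact (Complex.measurable_re.comp hsm.measurable).const_mul _

def NE (n : ℕ) (p q : ℝ) (H : ℝ → Rn n → ℝ≥0∞) : ℝ≥0∞ :=
  (∫⁻ t in Ioi (0 : ℝ), (∫⁻ x, H t x ^ p) ^ (q / p)) ^ (1 / q)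

lemma iSup_rpow_of_monotone {u : ℕ → ℝ≥0∞} (hu : Monotone u) {y : ℝ} (hy : 0 ≤ y) :
    (⨆ m, u m) ^ y = ⨆ m, u m ^ y := by
  have h2 : Tendsto (fun m => u m ^ y) atTop (𝓝 ((⨆ m, u m) ^ y)) :=
    (ENNReal.continuous_rpow_const.tendsto _).comp (tendsto_atTop_iSup hu)
  exact tendsto_nhds_unique h2
    (tendsto_atTop_iSup (fun a b hab => ENNReal.rpow_le_rpow (hu hab) hy))

section NElem
variable {n : ℕ} {p q : ℝ}

lemma NE_meas_inner {H : ℝ → Rn n → ℝ≥0∞} (hH : Measurable (fun z : ℝ × Rn n => H z.1 z.2)) :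
    Measurable (fun t => ∫⁻ x, H t x ^ p) :=
  Measurable.lintegral_prod_right' (f := fun z : ℝ × Rn n => H z.1 z.2 ^ p) (hH.pow_const p)

lemma NE_add_le (hp : 1 ≤ p) (hq : 1 ≤ q) {H₁ H₂ : ℝ → Rn n → ℝ≥0∞}
    (h₁ : Measurable (fun z : ℝ × Rn n => H₁ z.1 z.2))
    (h₂ : Measurable (fun z : ℝ × Rn n => H₂ z.1 z.2)) :
    NE n p q (fun t x => H₁ t x + H₂ t x) ≤ NE n p q H₁ + NE n p q H₂ := by
  have hp0 : (0:ℝ) < p := lt_of_lt_of_le one_pos hp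
  have hq0 : (0:ℝ) < q := lt_of_lt_of_le one_pos hq
  set Φ₁ : ℝ → ℝ≥0∞ := fun t => (∫⁻ x, H₁ t x ^ p) ^ (1 / p) with hΦ₁
  set Φ₂ : ℝ → ℝ≥0∞ := fun t => (∫⁻ x, H₂ t x ^ p) ^ (1 / p) with hΦ₂
  have key : ∀ (H : ℝ → Rn n → ℝ≥0∞),
      NE n p q H = (∫⁻ t in Ioi (0:ℝ), ((∫⁻ x, H t x ^ p) ^ (1 / p)) ^ q) ^ (1 / q) := by
    intro H
    rw [NE]
    congr 1
    refine lintegral_congr fun t => ?_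
    rw [← ENNReal.rpow_mul, one_div_mul_eq_div]
  rw [key, key, key]
  have step1 : (∫⁻ t in Ioi (0:ℝ), ((∫⁻ x, (H₁ t x + H₂ t x) ^ p) ^ (1 / p)) ^ q) ^ (1 / q)
      ≤ (∫⁻ t in Ioi (0:ℝ), (Φ₁ t + Φ₂ t) ^ q) ^ (1 / q) := by
    refine ENNReal.rpow_le_rpow (lintegral_mono fun t => ?_) (by positivity)
    refine ENNReal.rpow_le_rpow ?_ hq0.le
    exact ENNReal.lintegral_Lp_add_le
      ((h₁.comp (measurable_prodMk_left (x := t))).aemeasurable)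
      ((h₂.comp (measurable_prodMk_left (x := t))).aemeasurable) hp
  refine step1.trans ?_
  have m1 : AEMeasurable Φ₁ (volume.restrict (Ioi (0:ℝ))) :=
    ((NE_meas_inner h₁).pow_const _).aemeasurable
  have m2 : AEMeasurable Φ₂ (volume.restrict (Ioi (0:ℝ))) :=
    ((NE_meas_inner h₂).pow_const _).aemeasurable
  exact ENNReal.lintegral_Lp_add_le m1 m2 hq
end NElem

section NEtsum
variable {n : ℕ} {p q : ℝ}

lemma NE_zero (hp : 1 ≤ p) (hq : 1 ≤ q) : NE n p q (fun _ _ => 0) = 0 := by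
  have hp0 : (0:ℝ) < p := lt_of_lt_of_le one_pos hp
  have hq0 : (0:ℝ) < q := lt_of_lt_of_le one_pos hq
  rw [NE]
  simp_rw [ENNReal.zero_rpow_of_pos hp0, lintegral_zero,
    ENNReal.zero_rpow_of_pos (by positivity : (0:ℝ) < q / p), lintegral_zero,
    ENNReal.zero_rpow_of_pos (by positivity : (0:ℝ) < 1 / q)]

lemma NE_sum_le (hp : 1 ≤ p) (hq : 1 ≤ q) {H : ℕ → ℝ → Rn n → ℝ≥0∞}
    (hm : ∀ k, Measurable (fun z : ℝ × Rn n => H k z.1 z.2)) (m : ℕ) :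
    NE n p q (fun t x => ∑ k ∈ Finset.range m, H k t x) ≤ ∑ k ∈ Finset.range m, NE n p q (H k) := by
  induction m with
  | zero => simp [NE_zero hp hq]
  | succ m ih =>
    have hmeas : Measurable (fun z : ℝ × Rn n => ∑ k ∈ Finset.range m, H k z.1 z.2) :=
      Finset.measurable_sum _ fun k _ => hm k
    simp_rw [Finset.sum_range_succ]
    exact (NE_add_le hp hq hmeas (hm m)).trans (add_le_add ih le_rfl)

lemma NE_tsum_le (hp : 1 ≤ p) (hq : 1 ≤ q) {H : ℕ → ℝ → Rn n → ℝ≥0∞}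
    (hm : ∀ k, Measurable (fun z : ℝ × Rn n => H k z.1 z.2)) :
    NE n p q (fun t x => ∑' k, H k t x) ≤ ∑' k, NE n p q (H k) := by
  have hp0 : (0:ℝ) < p := lt_of_lt_of_le one_pos hp
  have hq0 : (0:ℝ) < q := lt_of_lt_of_le one_pos hq
  set S : ℕ → ℝ → Rn n → ℝ≥0∞ := fun m t x => ∑ k ∈ Finset.range m, H k t x with hS
  have hSmeas : ∀ m, Measurable (fun z : ℝ × Rn n => S m z.1 z.2) :=
    fun m => Finset.measurable_sum _ fun k _ => hm k
  have hSmono : ∀ t x, Monotone fun m => S m t x := fun t x a b hab =>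
    Finset.sum_le_sum_of_subset (Finset.range_subset_range.mpr hab)
  -- inner functional
  set A : ℕ → ℝ → ℝ≥0∞ := fun m t => ∫⁻ x, S m t x ^ p with hA
  have hAmeas : ∀ m, Measurable (A m) := fun m => NE_meas_inner (hSmeas m)
  have hAmono : ∀ t, Monotone fun m => A m t := fun t a b hab =>
    lintegral_mono fun x => ENNReal.rpow_le_rpow (hSmono t x hab) hp0.le
  have key : NE n p q (fun t x => ∑' k, H k t x) = ⨆ m, NE n p q (S m) := by
    have e1 : ∀ t x, (∑' k, H k t x) ^ p = ⨆ m, S m t x ^ p := by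
      intro t x
      rw [ENNReal.tsum_eq_iSup_nat, iSup_rpow_of_monotone (hSmono t x) hp0.le]
    have e2 : ∀ t, (∫⁻ x, (∑' k, H k t x) ^ p) ^ (q / p) = ⨆ m, A m t ^ (q / p) := by
      intro t
      rw [show (∫⁻ x, (∑' k, H k t x) ^ p) = ⨆ m, A m t by
          simp_rw [e1]
          exact lintegral_iSup (fun m => (hSmeas m).pow_const p |>.comp measurable_prodMk_left)
            (fun a b hab => fun x => ENNReal.rpow_le_rpow (hSmono t x hab) hp0.le),
        iSup_rpow_of_monotone (hAmono t) (by positivity)]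
    rw [NE]
    simp_rw [e2]
    rw [lintegral_iSup (fun m => (hAmeas m).pow_const _)
      (fun a b hab => fun t => ENNReal.rpow_le_rpow (hAmono t hab) (by positivity)),
      iSup_rpow_of_monotone ?_ (by positivity : (0:ℝ) ≤ 1 / q)]
    · rfl
    · intro a b hab
      exact lintegral_mono fun t => ENNReal.rpow_le_rpow (hAmono t hab) (by positivity)
  rw [key]
  refine iSup_le fun m => (NE_sum_le hp hq hm m).trans ?_
  exact ENNReal.sum_le_tsum _

lemma NE_ae_lt_top (hp : 1 ≤ p) (hq : 1 ≤ q) {H : ℝ → Rn n → ℝ≥0∞}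
    (hm : Measurable (fun z : ℝ × Rn n => H z.1 z.2)) (hfin : NE n p q H < ∞) :
    ∀ᵐ t ∂(volume.restrict (Ioi (0:ℝ))), ∀ᵐ x, H t x < ∞ := by
  have hp0 : (0:ℝ) < p := lt_of_lt_of_le one_pos hp
  have hq0 : (0:ℝ) < q := lt_of_lt_of_le one_pos hq
  rw [NE, ENNReal.rpow_lt_top_iff_of_pos (by positivity)] at hfin
  have h1 : ∀ᵐ t ∂(volume.restrict (Ioi (0:ℝ))), (∫⁻ x, H t x ^ p) ^ (q / p) < ∞ :=
    ae_lt_top ((NE_meas_inner hm).pow_const _) hfin.ne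
  refine h1.mono fun t ht => ?_
  rw [ENNReal.rpow_lt_top_iff_of_pos (by positivity)] at ht
  have h2 : ∀ᵐ x, H t x ^ p < ∞ :=
    ae_lt_top ((hm.comp measurable_prodMk_left).pow_const p) ht.ne
  refine h2.mono fun x hx => ?_
  rwa [ENNReal.rpow_lt_top_iff_of_pos hp0] at hx
end NEtsum

section ops
variable {n : ℕ} {α p q : ℝ}

lemma SopE_const_mul (c : ℝ) (hc : 0 ≤ c) (F : ℝ → Rn n → ℝ) (t : ℝ) (x : Rn n) :
    SopE n α (fun s y => c * F s y) t x = ENNReal.ofReal c * SopE n α F t x := by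
  rw [SopE, SopE, ← lintegral_const_mul' _ _ ENNReal.ofReal_ne_top]
  refine lintegral_congr fun s => ?_
  rw [← lintegral_const_mul' _ _ ENNReal.ofReal_ne_top]
  refine lintegral_congr fun y => ?_
  rw [ENNReal.ofReal_mul hc]
  ring

lemma mixedNorm_const_mul (hp : 1 ≤ p) (hq : 1 ≤ q) (c : ℝ) (hc : 0 ≤ c)
    (F : ℝ → Rn n → ℝ) :
    mixedNorm n q p (fun s y => c * F s y) = ENNReal.ofReal c * mixedNorm n q p F := by
  have hp0 : (0:ℝ) < p := lt_of_lt_of_le one_pos hp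
  have hq0 : (0:ℝ) < q := lt_of_lt_of_le one_pos hq
  rw [mixedNorm, mixedNorm]
  have e1 : ∀ t, (∫⁻ x, ENNReal.ofReal |c * F t x| ^ p) ^ (q / p)
      = ENNReal.ofReal c ^ q * (∫⁻ x, ENNReal.ofReal |F t x| ^ p) ^ (q / p) := by
    intro t
    have : (∫⁻ x, ENNReal.ofReal |c * F t x| ^ p)
        = ENNReal.ofReal c ^ p * ∫⁻ x, ENNReal.ofReal |F t x| ^ p := by
      rw [← lintegral_const_mul' _ _ (ENNReal.rpow_ne_top_of_nonneg hp0.le ENNReal.ofReal_ne_top)]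
      refine lintegral_congr fun y => ?_
      rw [abs_mul, abs_of_nonneg hc, ENNReal.ofReal_mul hc,
        ENNReal.mul_rpow_of_nonneg _ _ hp0.le]
    rw [this, ENNReal.mul_rpow_of_nonneg _ _ (by positivity : (0:ℝ) ≤ q / p),
      ← ENNReal.rpow_mul]
    congr 2
    field_simp
  simp_rw [e1]
  rw [lintegral_const_mul' _ _ (ENNReal.rpow_ne_top_of_nonneg hq0.le ENNReal.ofReal_ne_top),
    ENNReal.mul_rpow_of_nonneg _ _ (by positivity : (0:ℝ) ≤ 1 / q), ← ENNReal.rpow_mul]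
  congr 2
  field_simp
  simp

set_option maxHeartbeats 1000000 in
lemma SopE_tsum (hα : 0 < α) {F : ℕ → ℝ → Rn n → ℝ}
    (hm : ∀ k, Measurable (Function.uncurry (F k))) (t : ℝ) (x : Rn n) :
    (∫⁻ s in Ioc (0:ℝ) t, ∫⁻ y,
        ENNReal.ofReal (fracKernel n α (t - s) (x - y)) * ∑' k, ENNReal.ofReal (F k s y))
      = ∑' k, SopE n α (F k) t x := by
  have hker : Measurable (fun w : ℝ × Rn n =>
      ENNReal.ofReal (fracKernel n α (t - w.1) (x - w.2))) := by
    have h1 : Measurable (fun w : ℝ × Rn n => ((t - w.1, x - w.2) : ℝ × Rn n)) :=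
      (measurable_const.sub measurable_fst).prodMk (measurable_const.sub measurable_snd)
    have h2 := (measurable_fracKernel n α hα).comp h1
    simp only [Function.comp_def] at h2
    exact h2.ennreal_ofReal
  have hterm : ∀ k, Measurable (fun w : ℝ × Rn n =>
      ENNReal.ofReal (fracKernel n α (t - w.1) (x - w.2)) * ENNReal.ofReal (F k w.1 w.2)) :=
    fun k => hker.mul (ENNReal.measurable_ofReal.comp (hm k))
  calc (∫⁻ s in Ioc (0:ℝ) t, ∫⁻ y,
        ENNReal.ofReal (fracKernel n α (t - s) (x - y)) * ∑' k, ENNReal.ofReal (F k s y))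
      = ∫⁻ s in Ioc (0:ℝ) t, ∫⁻ y, ∑' k,
          ENNReal.ofReal (fracKernel n α (t - s) (x - y)) * ENNReal.ofReal (F k s y) := by
        simp_rw [ENNReal.tsum_mul_left]
    _ = ∫⁻ s in Ioc (0:ℝ) t, ∑' k, ∫⁻ y,
          ENNReal.ofReal (fracKernel n α (t - s) (x - y)) * ENNReal.ofReal (F k s y) := by
        refine lintegral_congr fun s => ?_
        exact lintegral_tsum fun k =>
          ((hterm k).comp measurable_prodMk_left).aemeasurable
    _ = ∑' k, SopE n α (F k) t x := by
        simp_rw [SopE]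
        exact lintegral_tsum fun k =>
          (Measurable.lintegral_prod_right' (hterm k)).aemeasurable

end ops

end Helpers

/-- Null capacity is equivalent to being contained in a blow-up set. -/
theorem stmt13 (n : ℕ) (hn : 1 ≤ n) (α : ℝ) (hα : α ∈ Set.Ioo (0 : ℝ) 1)
    (p q : ℝ) (hp : 1 ≤ p) (hq : 1 ≤ q)
    (K : Set (ℝ × Rn n)) (hK : K.Nonempty) (hK' : K ⊆ Ioi (0 : ℝ) ×ˢ univ) :
    capacity n α p q K = 0 ↔
      ∃ F : ℝ → Rn n → ℝ, Measurable (Function.uncurry F) ∧ (∀ s y, 0 ≤ F s y) ∧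
        mixedNorm n q p F < ∞ ∧
        K ⊆ {z : ℝ × Rn n | SopE n α F z.1 z.2 = ∞} := by
  have hα0 : 0 < α := hα.1
  have hp0 : (0:ℝ) < p := lt_of_lt_of_le one_pos hp
  have hq0 : (0:ℝ) < q := lt_of_lt_of_le one_pos hq
  have hm1 : 1 ≤ min p q := le_min hp hq
  have hm0 : (0:ℝ) < min p q := lt_of_lt_of_le one_pos hm1
  constructor
  · intro hcap
    have hex : ∀ k : ℕ, ∃ F : ℝ → Rn n → ℝ, Measurable (Function.uncurry F) ∧
        (∀ s y, 0 ≤ F s y) ∧ (∀ z ∈ K, 1 ≤ SopE n α F z.1 z.2) ∧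
        mixedNorm n q p F ≤ (2⁻¹ : ℝ≥0∞) ^ k := by
      intro k
      have hb0 : (0:ℝ≥0∞) < (2⁻¹ : ℝ≥0∞) ^ k :=
        ENNReal.pow_pos (by simp) k
      have hbtop : ((2⁻¹ : ℝ≥0∞) ^ k) ≠ ∞ :=
        ENNReal.pow_ne_top (by simp)
      have hεpos : (0:ℝ≥0∞) < ((2⁻¹ : ℝ≥0∞) ^ k) ^ min p q :=
        ENNReal.rpow_pos hb0 hbtop
      have hlt : capacity n α p q K < ((2⁻¹ : ℝ≥0∞) ^ k) ^ min p q := by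
        rw [hcap]; exact hεpos
      rw [capacity] at hlt
      obtain ⟨F, hF⟩ := iInf_lt_iff.mp hlt
      obtain ⟨h1, hF⟩ := iInf_lt_iff.mp hF
      obtain ⟨h2, hF⟩ := iInf_lt_iff.mp hF
      obtain ⟨h3, hF⟩ := iInf_lt_iff.mp hF
      refine ⟨F, h1, h2, h3, ?_⟩
      by_contra hcon
      push_neg at hcon
      exact absurd (ENNReal.rpow_le_rpow hcon.le hm0.le) (not_le.mpr hF)
    choose F hFmeas hF0 hFS hFnorm using hex
    set G : ℝ → Rn n → ℝ≥0∞ := fun t x => ∑' k, ENNReal.ofReal (F k t x) with hG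
    have hHmeas : ∀ k, Measurable (fun z : ℝ × Rn n => ENNReal.ofReal (F k z.1 z.2)) :=
      fun k => (hFmeas k).ennreal_ofReal
    have hGmeas : Measurable (fun z : ℝ × Rn n => G z.1 z.2) :=
      Measurable.ennreal_tsum hHmeas
    have hNEmix : ∀ k, NE n p q (fun t x => ENNReal.ofReal (F k t x)) = mixedNorm n q p (F k) := by
      intro k
      rw [NE, mixedNorm]
      congr 1
      refine lintegral_congr fun t => ?_
      congr 1
      refine lintegral_congr fun x => ?_
      rw [abs_of_nonneg (hF0 k t x)]
    have hgeo : (∑' k : ℕ, (2⁻¹ : ℝ≥0∞) ^ k) < ∞ := by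
      rw [ENNReal.tsum_geometric]
      simp [ENNReal.one_sub_inv_two]
    have hNEfin : NE n p q G < ∞ := by
      refine lt_of_le_of_lt ((NE_tsum_le hp hq hHmeas).trans ?_) hgeo
      exact ENNReal.tsum_le_tsum fun k => (hNEmix k).le.trans (hFnorm k)
    have hae : ∀ᵐ t ∂(volume.restrict (Ioi (0:ℝ))), ∀ᵐ x, G t x < ∞ :=
      NE_ae_lt_top hp hq hGmeas hNEfin
    refine ⟨fun t x => (G t x).toReal, ENNReal.measurable_toReal.comp hGmeas,
      fun s y => ENNReal.toReal_nonneg, ?_, ?_⟩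
    · have hmix : mixedNorm n q p (fun t x => (G t x).toReal) = NE n p q G := by
        rw [mixedNorm, NE]
        congr 1
        refine lintegral_congr_ae (hae.mono fun t ht => ?_)
        dsimp only
        congr 1
        refine lintegral_congr_ae (ht.mono fun x hx => ?_)
        dsimp only
        rw [abs_of_nonneg ENNReal.toReal_nonneg, ENNReal.ofReal_toReal hx.ne]
      rw [hmix]; exact hNEfin
    · intro z hz
      have ht : (0:ℝ) < z.1 := (hK' hz).1
      show SopE n α (fun t x => (G t x).toReal) z.1 z.2 = ∞
      have hae2 : ∀ᵐ s ∂(volume.restrict (Ioc (0:ℝ) z.1)),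
          ∀ᵐ y, ENNReal.ofReal ((G s y).toReal) = G s y := by
        have h : ∀ᵐ s ∂(volume.restrict (Ioc (0:ℝ) z.1)), ∀ᵐ y, G s y < ⊤ :=
          ae_mono (Measure.restrict_mono (Ioc_subset_Ioi_self : Ioc (0:ℝ) z.1 ⊆ Ioi 0) le_rfl) hae
        exact h.mono fun s hs => hs.mono fun y hy => ENNReal.ofReal_toReal hy.ne
      have h1 : SopE n α (fun t x => (G t x).toReal) z.1 z.2
          = ∫⁻ s in Ioc (0:ℝ) z.1, ∫⁻ y,
              ENNReal.ofReal (fracKernel n α (z.1 - s) (z.2 - y)) * G s y := by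
        rw [SopE]
        refine lintegral_congr_ae (hae2.mono fun s hs => ?_)
        refine lintegral_congr_ae (hs.mono fun y hy => ?_)
        dsimp only
        rw [hy]
      rw [h1]
      simp only [hG]
      rw [SopE_tsum hα0 hFmeas z.1 z.2]
      refine top_le_iff.mp ?_
      calc (⊤:ℝ≥0∞) = ∑' _ : ℕ, (1:ℝ≥0∞) :=
            (ENNReal.tsum_const_eq_top_of_ne_zero one_ne_zero).symm
        _ ≤ ∑' k, SopE n α (F k) z.1 z.2 := ENNReal.tsum_le_tsum fun k => hFS k z hz
  · rintro ⟨F, hFmeas, hF0, hFnorm, hFK⟩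
    have hMtop : mixedNorm n q p F ≠ ∞ := hFnorm.ne
    have key : ∀ c : ℝ, 0 < c →
        capacity n α p q K ≤ (ENNReal.ofReal c * mixedNorm n q p F) ^ min p q := by
      intro c hc
      have h1 : Measurable (Function.uncurry fun s y => c * F s y) := hFmeas.const_mul c
      have h2 : ∀ s y, 0 ≤ c * F s y := fun s y => mul_nonneg hc.le (hF0 s y)
      have h3 : ∀ z ∈ K, 1 ≤ SopE n α (fun s y => c * F s y) z.1 z.2 := by
        intro z hz
        rw [SopE_const_mul c hc.le, (hFK hz : SopE n α F z.1 z.2 = ∞),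
          ENNReal.mul_top (by simpa using hc : ENNReal.ofReal c ≠ 0)]
        exact le_top
      have step : capacity n α p q K ≤ mixedNorm n q p (fun s y => c * F s y) ^ min p q := by
        rw [capacity]
        refine le_trans (iInf_le _ (fun s y => c * F s y)) ?_
        refine le_trans (iInf_le _ h1) ?_
        refine le_trans (iInf_le _ h2) ?_
        exact iInf_le _ h3
      rwa [mixedNorm_const_mul hp hq c hc.le] at step
    by_contra hne
    rcases eq_or_ne (mixedNorm n q p F) 0 with hM0 | hM0
    · have h := key 1 one_pos
      rw [hM0, mul_zero, ENNReal.zero_rpow_of_pos hm0] at h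
      exact hne (le_antisymm h (zero_le))
    · set δ : ℝ≥0∞ := min 1 (capacity n α p q K) with hδ
      have hδ0 : δ ≠ 0 := (lt_min one_pos (zero_lt_iff.mpr hne)).ne'
      have hδtop : δ ≠ ∞ := ((min_le_left _ _).trans_lt ENNReal.one_lt_top).ne
      set τ : ℝ≥0∞ := δ / 2 with hτ
      have hτ0 : τ ≠ 0 := by
        simp only [hτ, ne_eq, ENNReal.div_eq_zero_iff]
        push_neg
        exact ⟨hδ0, ENNReal.ofNat_ne_top⟩
      have hτtop : τ ≠ ∞ := by
        simp only [hτ]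
        exact (ENNReal.div_lt_top hδtop (by norm_num)).ne
      have hτ1 : τ ≤ 1 := le_trans ENNReal.half_le_self (min_le_left _ _)
      set c : ℝ := (τ * (mixedNorm n q p F)⁻¹).toReal with hc
      have hfin : τ * (mixedNorm n q p F)⁻¹ ≠ ∞ :=
        ENNReal.mul_ne_top hτtop (ENNReal.inv_ne_top.mpr hM0)
      have hne0 : τ * (mixedNorm n q p F)⁻¹ ≠ 0 := by
        simp only [ne_eq, mul_eq_zero]
        push_neg
        exact ⟨hτ0, ENNReal.inv_ne_zero.mpr hMtop⟩
      have hcpos : 0 < c := ENNReal.toReal_pos hne0 hfin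
      have hofc : ENNReal.ofReal c = τ * (mixedNorm n q p F)⁻¹ := ENNReal.ofReal_toReal hfin
      have h := key c hcpos
      rw [hofc, mul_assoc, ENNReal.inv_mul_cancel hM0 hMtop, mul_one] at h
      have h2 : τ ^ min p q ≤ τ ^ (1:ℝ) :=
        ENNReal.rpow_le_rpow_of_exponent_ge hτ1 hm1
      rw [ENNReal.rpow_one] at h2
      have hlt : τ < δ := ENNReal.half_lt_self hδ0 hδtop
      have : capacity n α p q K < capacity n α p q K :=
        lt_of_le_of_lt (h.trans h2) (lt_of_lt_of_le hlt (min_le_right _ _))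
      exact lt_irrefl _ this
end
end

section
/- Let n ≥ 1, α ∈ (0,1), p ∈ [1,∞), q ∈ [1,∞), and set β := min(p,q)·(n/p + 2α/q − 2α). Then for every r > 0: C_{p,q}^{(α)}(B_r^{(α)}(0,0)) = r^{β} · C_{p,q}^{(α)}(B_1^{(α)}(0,0)), where B_r^{(α)}(0,0) := {(t,x) ∈ (0,∞)×ℝⁿ : t < r^{2α} and |x| < r}. -/
open MeasureTheory ENNReal Set

noncomputable section

section ScalingAux

/-- Change of variables `s ↦ c * s` for `lintegral` over `ℝ`. -/
lemma lint_mul (g : ℝ → ℝ≥0∞) {c : ℝ} (hc : c ≠ 0) :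
    ∫⁻ s, g (c * s) = ENNReal.ofReal |c⁻¹| * ∫⁻ s, g s := by
  have h := lintegral_map_equiv (μ := (volume : Measure ℝ)) g
      (Homeomorph.mulLeft₀ c hc).toMeasurableEquiv
  simp only [Homeomorph.toMeasurableEquiv_coe, Homeomorph.coe_mulLeft₀] at h
  rw [← h, Real.map_volume_mul_left hc, lintegral_smul_measure, smul_eq_mul]

/-- Change of variables `y ↦ l • y` for `lintegral` over `ℝⁿ`. -/
lemma lint_smul {n : ℕ} (f : Rn n → ℝ≥0∞) {l : ℝ} (hl : l ≠ 0) :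
    ∫⁻ y, f (l • y) = ENNReal.ofReal |(l ^ n)⁻¹| * ∫⁻ y, f y := by
  have h := lintegral_map_equiv (μ := (volume : Measure (Rn n))) f
      (Homeomorph.smul (isUnit_iff_ne_zero.2 hl).unit).toMeasurableEquiv
  simp only [Homeomorph.toMeasurableEquiv_coe, Homeomorph.smul_apply, Units.smul_def,
    IsUnit.unit_spec] at h
  have hco : ⇑(Homeomorph.smul (isUnit_iff_ne_zero.2 hl).unit) = (l • · : Rn n → Rn n) := by
    funext y; simp [Units.smul_def]
  rw [← h, hco, Measure.map_addHaar_smul (μ := volume) hl, lintegral_smul_measure,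
    finrank_euclideanSpace_fin, smul_eq_mul]

/-- Scaling of the fractional heat kernel. -/
lemma kernel_scale {n : ℕ} {l : ℝ} (hl : 0 < l) (α t : ℝ) (x : Rn n) :
    fracKernel n α (l ^ (2 * α) * t) (l • x) = (l ^ n)⁻¹ * fracKernel n α t x := by
  unfold fracKernel
  have hpt : (fun y : Rn n => Complex.exp (Complex.I * ((inner ℝ (l • x) y : ℝ) : ℂ) -
      ((l ^ (2 * α) * t * ‖y‖ ^ (2 * α) : ℝ) : ℂ)))
      = fun y : Rn n => (fun z : Rn n => Complex.exp (Complex.I * ((inner ℝ x z : ℝ) : ℂ) -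
      ((t * ‖z‖ ^ (2 * α) : ℝ) : ℂ))) (l • y) := by
    funext y
    have h1 : (inner ℝ (l • x) y : ℝ) = (inner ℝ x (l • y) : ℝ) := by
      rw [real_inner_smul_left, real_inner_smul_right]
    have h2 : l ^ (2 * α) * t * ‖y‖ ^ (2 * α) = t * ‖l • y‖ ^ (2 * α) := by
      rw [norm_smul, Real.norm_eq_abs, abs_of_pos hl,
        Real.mul_rpow hl.le (norm_nonneg y)]
      ring
    simp only [h1, h2]
  rw [hpt, MeasureTheory.Measure.integral_comp_smul (μ := volume)
      (fun z : Rn n => Complex.exp (Complex.I * ((inner ℝ x z : ℝ) : ℂ) -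
      ((t * ‖z‖ ^ (2 * α) : ℝ) : ℂ))) l, finrank_euclideanSpace_fin,
    abs_of_pos (inv_pos.2 (pow_pos hl n)), Complex.smul_re]
  simp only [smul_eq_mul]
  ring

/-- Change of variables `s ↦ c⁻¹ * s` for set lintegrals on `ℝ`. -/
lemma time_scale (J : ℝ → ℝ≥0∞) {c : ℝ} (hc : 0 < c) {S S' : Set ℝ}
    (hS : MeasurableSet S) (hS' : MeasurableSet S')
    (h : ∀ s, c⁻¹ * s ∈ S' ↔ s ∈ S) :
    ∫⁻ s in S, J (c⁻¹ * s) = ENNReal.ofReal c * ∫⁻ s in S', J s := by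
  rw [← lintegral_indicator hS, ← lintegral_indicator hS']
  have key : ∀ s : ℝ, S.indicator (fun s => J (c⁻¹ * s)) s = S'.indicator J (c⁻¹ * s) := by
    intro s
    by_cases hs : s ∈ S
    · rw [indicator_of_mem hs, indicator_of_mem ((h s).2 hs)]
    · rw [indicator_of_notMem hs, indicator_of_notMem (fun hmem => hs ((h s).1 hmem))]
  calc ∫⁻ s, S.indicator (fun s => J (c⁻¹ * s)) s
      = ∫⁻ s, S'.indicator J (c⁻¹ * s) := by simp only [key]
    _ = ENNReal.ofReal |c⁻¹⁻¹| * ∫⁻ s, S'.indicator J s :=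
        lint_mul (S'.indicator J) (inv_ne_zero hc.ne')
    _ = ENNReal.ofReal c * ∫⁻ s, S'.indicator J s := by rw [inv_inv, abs_of_pos hc]

lemma mem_Ioc_scale {c : ℝ} (hc : 0 < c) (t : ℝ) :
    ∀ s : ℝ, c⁻¹ * s ∈ Ioc 0 (c⁻¹ * t) ↔ s ∈ Ioc 0 t := by
  intro s
  have hcs : c * (c⁻¹ * s) = s := by field_simp
  have hct : c * (c⁻¹ * t) = t := by field_simp
  simp only [Set.mem_Ioc]
  constructor
  · rintro ⟨h1, h2⟩
    have h1' := mul_pos hc h1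
    have h2' := mul_le_mul_of_nonneg_left h2 hc.le
    rw [hcs] at h1'
    rw [hcs, hct] at h2'
    exact ⟨h1', h2'⟩
  · rintro ⟨h1, h2⟩
    exact ⟨mul_pos (inv_pos.2 hc) h1, mul_le_mul_of_nonneg_left h2 (inv_pos.2 hc).le⟩

lemma mem_Ioi_scale {c : ℝ} (hc : 0 < c) :
    ∀ s : ℝ, c⁻¹ * s ∈ Ioi (0 : ℝ) ↔ s ∈ Ioi (0 : ℝ) := by
  intro s
  have hcs : c * (c⁻¹ * s) = s := by field_simp
  simp only [Set.mem_Ioi]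
  constructor
  · intro h1
    have h1' := mul_pos hc h1
    rwa [hcs] at h1'
  · intro h1
    exact mul_pos (inv_pos.2 hc) h1

/-- Scaling identity for `SopE`. -/
lemma SopE_scale {n : ℕ} {l : ℝ} (hl : 0 < l) (α : ℝ) (F : ℝ → Rn n → ℝ) (t : ℝ) (x : Rn n) :
    SopE n α (fun s y => (l ^ (2 * α))⁻¹ * F ((l ^ (2 * α))⁻¹ * s) (l⁻¹ • y)) t x
      = SopE n α F ((l ^ (2 * α))⁻¹ * t) (l⁻¹ • x) := by
  have hc : (0:ℝ) < l ^ (2 * α) := Real.rpow_pos_of_pos hl _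
  have hln : (0:ℝ) < l ^ n := pow_pos hl n
  unfold SopE
  have inner_eq : ∀ s : ℝ,
      (∫⁻ y, ENNReal.ofReal (fracKernel n α (t - s) (x - y)) *
        ENNReal.ofReal ((l ^ (2 * α))⁻¹ * F ((l ^ (2 * α))⁻¹ * s) (l⁻¹ • y)))
      = ENNReal.ofReal ((l ^ (2 * α))⁻¹) *
        ∫⁻ y, ENNReal.ofReal (fracKernel n α ((l ^ (2 * α))⁻¹ * t - (l ^ (2 * α))⁻¹ * s)
          (l⁻¹ • x - y)) * ENNReal.ofReal (F ((l ^ (2 * α))⁻¹ * s) y) := by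
    intro s
    calc (∫⁻ y, ENNReal.ofReal (fracKernel n α (t - s) (x - y)) *
          ENNReal.ofReal ((l ^ (2 * α))⁻¹ * F ((l ^ (2 * α))⁻¹ * s) (l⁻¹ • y)))
        = ∫⁻ y, (fun z : Rn n => ENNReal.ofReal (fracKernel n α (t - s) (x - l • z)) *
            ENNReal.ofReal ((l ^ (2 * α))⁻¹ * F ((l ^ (2 * α))⁻¹ * s) z)) (l⁻¹ • y) := by
          congr 1
          simp only [smul_inv_smul₀ hl.ne']
      _ = ENNReal.ofReal |((l⁻¹) ^ n)⁻¹| *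
            ∫⁻ z, ENNReal.ofReal (fracKernel n α (t - s) (x - l • z)) *
              ENNReal.ofReal ((l ^ (2 * α))⁻¹ * F ((l ^ (2 * α))⁻¹ * s) z) :=
          lint_smul (fun z : Rn n => ENNReal.ofReal (fracKernel n α (t - s) (x - l • z)) *
            ENNReal.ofReal ((l ^ (2 * α))⁻¹ * F ((l ^ (2 * α))⁻¹ * s) z))
            (inv_ne_zero hl.ne')
      _ = ENNReal.ofReal ((l ^ (2 * α))⁻¹) *
            ∫⁻ y, ENNReal.ofReal (fracKernel n α ((l ^ (2 * α))⁻¹ * t - (l ^ (2 * α))⁻¹ * s)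
              (l⁻¹ • x - y)) * ENNReal.ofReal (F ((l ^ (2 * α))⁻¹ * s) y) := by
          rw [inv_pow, inv_inv, abs_of_pos hln]
          have hK : ∀ z : Rn n, fracKernel n α (t - s) (x - l • z)
              = (l ^ n)⁻¹ * fracKernel n α ((l ^ (2 * α))⁻¹ * t - (l ^ (2 * α))⁻¹ * s)
                  (l⁻¹ • x - z) := by
            intro z
            have harg1 : t - s = l ^ (2 * α) * ((l ^ (2 * α))⁻¹ * t - (l ^ (2 * α))⁻¹ * s) := by
              field_simp
            have harg2 : x - l • z = l • (l⁻¹ • x - z) := by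
              rw [smul_sub, smul_inv_smul₀ hl.ne']
            rw [harg1, harg2, kernel_scale hl]
          have hpt : ∀ z : Rn n,
              ENNReal.ofReal (fracKernel n α (t - s) (x - l • z)) *
                ENNReal.ofReal ((l ^ (2 * α))⁻¹ * F ((l ^ (2 * α))⁻¹ * s) z)
              = (ENNReal.ofReal ((l ^ n)⁻¹) * ENNReal.ofReal ((l ^ (2 * α))⁻¹)) *
                (ENNReal.ofReal (fracKernel n α ((l ^ (2 * α))⁻¹ * t - (l ^ (2 * α))⁻¹ * s)
                  (l⁻¹ • x - z)) * ENNReal.ofReal (F ((l ^ (2 * α))⁻¹ * s) z)) := by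
            intro z
            rw [hK z, ENNReal.ofReal_mul (inv_pos.2 hln).le,
              ENNReal.ofReal_mul (inv_pos.2 hc).le]
            ring
          simp only [hpt]
          rw [lintegral_const_mul' _ _
              (ENNReal.mul_ne_top ENNReal.ofReal_ne_top ENNReal.ofReal_ne_top),
            ← mul_assoc, ← mul_assoc, ← ENNReal.ofReal_mul hln.le, mul_inv_cancel₀ hln.ne',
            ENNReal.ofReal_one, one_mul]
  simp only [inner_eq]
  have ht := time_scale (fun σ => ENNReal.ofReal ((l ^ (2 * α))⁻¹) *
      ∫⁻ y, ENNReal.ofReal (fracKernel n α ((l ^ (2 * α))⁻¹ * t - σ) (l⁻¹ • x - y)) *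
        ENNReal.ofReal (F σ y)) hc measurableSet_Ioc measurableSet_Ioc
      (mem_Ioc_scale hc t)
  rw [ht, lintegral_const_mul' _ _ ENNReal.ofReal_ne_top, ← mul_assoc,
    ← ENNReal.ofReal_mul hc.le, mul_inv_cancel₀ hc.ne', ENNReal.ofReal_one, one_mul]

/-- Scaling identity for the mixed norm. -/
lemma mixedNorm_scale {n : ℕ} {l : ℝ} (hl : 0 < l) (α : ℝ) {p q : ℝ}
    (hp : 1 ≤ p) (hq : 1 ≤ q) (F : ℝ → Rn n → ℝ) :
    mixedNorm n q p (fun s y => (l ^ (2 * α))⁻¹ * F ((l ^ (2 * α))⁻¹ * s) (l⁻¹ • y))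
      = ENNReal.ofReal (l ^ ((n : ℝ) / p + 2 * α / q - 2 * α)) * mixedNorm n q p F := by
  have hc : (0:ℝ) < l ^ (2 * α) := Real.rpow_pos_of_pos hl _
  have hln : (0:ℝ) < l ^ n := pow_pos hl n
  have hp0 : (0:ℝ) < p := lt_of_lt_of_le one_pos hp
  have hq0 : (0:ℝ) < q := lt_of_lt_of_le one_pos hq
  unfold mixedNorm
  have inner_eq : ∀ t : ℝ,
      (∫⁻ x : Rn n, ENNReal.ofReal |(l ^ (2 * α))⁻¹ * F ((l ^ (2 * α))⁻¹ * t) (l⁻¹ • x)| ^ p)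
      = (ENNReal.ofReal ((l ^ (2 * α))⁻¹) ^ p * ENNReal.ofReal (l ^ n)) *
          ∫⁻ x : Rn n, ENNReal.ofReal |F ((l ^ (2 * α))⁻¹ * t) x| ^ p := by
    intro t
    calc (∫⁻ x : Rn n, ENNReal.ofReal |(l ^ (2 * α))⁻¹ * F ((l ^ (2 * α))⁻¹ * t) (l⁻¹ • x)| ^ p)
        = ∫⁻ x : Rn n, (fun z : Rn n => ENNReal.ofReal ((l ^ (2 * α))⁻¹) ^ p *
            ENNReal.ofReal |F ((l ^ (2 * α))⁻¹ * t) z| ^ p) (l⁻¹ • x) := by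
          congr 1
          funext x
          simp only
          rw [abs_mul, abs_of_pos (inv_pos.2 hc), ENNReal.ofReal_mul (inv_pos.2 hc).le,
            ENNReal.mul_rpow_of_nonneg _ _ (le_of_lt hp0)]
      _ = ENNReal.ofReal |((l⁻¹) ^ n)⁻¹| * ∫⁻ z : Rn n, ENNReal.ofReal ((l ^ (2 * α))⁻¹) ^ p *
            ENNReal.ofReal |F ((l ^ (2 * α))⁻¹ * t) z| ^ p :=
          lint_smul (fun z : Rn n => ENNReal.ofReal ((l ^ (2 * α))⁻¹) ^ p *
            ENNReal.ofReal |F ((l ^ (2 * α))⁻¹ * t) z| ^ p) (inv_ne_zero hl.ne')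
      _ = (ENNReal.ofReal ((l ^ (2 * α))⁻¹) ^ p * ENNReal.ofReal (l ^ n)) *
            ∫⁻ x : Rn n, ENNReal.ofReal |F ((l ^ (2 * α))⁻¹ * t) x| ^ p := by
          rw [inv_pow, inv_inv, abs_of_pos hln,
            lintegral_const_mul' _ _
              (ENNReal.rpow_ne_top_of_nonneg hp0.le ENNReal.ofReal_ne_top)]
          ring
  simp only [inner_eq]
  have hD : ∀ t : ℝ,
      ((ENNReal.ofReal ((l ^ (2 * α))⁻¹) ^ p * ENNReal.ofReal (l ^ n)) *
        ∫⁻ x : Rn n, ENNReal.ofReal |F ((l ^ (2 * α))⁻¹ * t) x| ^ p) ^ (q / p)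
      = (ENNReal.ofReal ((l ^ (2 * α))⁻¹) ^ p * ENNReal.ofReal (l ^ n)) ^ (q / p) *
        (∫⁻ x : Rn n, ENNReal.ofReal |F ((l ^ (2 * α))⁻¹ * t) x| ^ p) ^ (q / p) := by
    intro t
    rw [ENNReal.mul_rpow_of_nonneg _ _ (by positivity)]
  simp only [hD]
  rw [lintegral_const_mul' _ _ (ENNReal.rpow_ne_top_of_nonneg (by positivity)
    (ENNReal.mul_ne_top (ENNReal.rpow_ne_top_of_nonneg hp0.le ENNReal.ofReal_ne_top)
      ENNReal.ofReal_ne_top))]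
  have ht := time_scale (fun σ => (∫⁻ x : Rn n, ENNReal.ofReal |F σ x| ^ p) ^ (q / p)) hc
      measurableSet_Ioi measurableSet_Ioi (mem_Ioi_scale hc)
  rw [ht, ← mul_assoc, ENNReal.mul_rpow_of_nonneg _ _ (by positivity)]
  congr 1
  -- constant computation
  have hofr : ∀ u v : ℝ, ENNReal.ofReal (l ^ u) ^ v = ENNReal.ofReal (l ^ (u * v)) := by
    intro u v
    rw [ENNReal.ofReal_rpow_of_pos (Real.rpow_pos_of_pos hl u), ← Real.rpow_mul hl.le]
  have hmulr : ∀ u v : ℝ, ENNReal.ofReal (l ^ u) * ENNReal.ofReal (l ^ v)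
      = ENNReal.ofReal (l ^ (u + v)) := by
    intro u v
    rw [← ENNReal.ofReal_mul (Real.rpow_pos_of_pos hl u).le, ← Real.rpow_add hl]
  have h1 : ((l : ℝ) ^ (2 * α))⁻¹ = l ^ (-(2 * α)) := by
    rw [Real.rpow_neg hl.le]
  have h2 : ((l : ℝ) ^ n) = l ^ ((n : ℝ)) := (Real.rpow_natCast l n).symm
  rw [h1, h2, hofr, hmulr, hofr, hmulr, hofr]
  congr 1
  field_simp
  ring

end ScalingAux

/-- One-sided scaling inequality for the capacity of parabolic balls at the origin. -/
lemma cap_le {n : ℕ} (α : ℝ) {p q : ℝ} (hp : 1 ≤ p) (hq : 1 ≤ q)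
    {l ρ : ℝ} (hl : 0 < l) (hρ : 0 < ρ) :
    capacity n α p q (pball n α 0 0 (l * ρ)) ≤
      ENNReal.ofReal (l ^ (min p q * ((n : ℝ) / p + 2 * α / q - 2 * α))) *
        capacity n α p q (pball n α 0 0 ρ) := by
  have hm : (0:ℝ) < min p q := lt_of_lt_of_le one_pos (le_min hp hq)
  have hc : (0:ℝ) < l ^ (2 * α) := Real.rpow_pos_of_pos hl _
  set C := ENNReal.ofReal (l ^ (min p q * ((n : ℝ) / p + 2 * α / q - 2 * α))) with hCdef
  have hC0 : C ≠ 0 := ne_of_gt (ENNReal.ofReal_pos.2 (Real.rpow_pos_of_pos hl _))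
  have hCt : C ≠ ∞ := ENNReal.ofReal_ne_top
  rw [← ENNReal.div_le_iff' hC0 hCt]
  refine le_iInf fun F => le_iInf fun hmF => le_iInf fun hnn => le_iInf fun hS => ?_
  rw [ENNReal.div_le_iff hC0 hCt]
  have hmG : Measurable (Function.uncurry
      (fun s y => (l ^ (2 * α))⁻¹ * F ((l ^ (2 * α))⁻¹ * s) (l⁻¹ • y) : ℝ → Rn n → ℝ)) := by
    have : Function.uncurry
        (fun s y => (l ^ (2 * α))⁻¹ * F ((l ^ (2 * α))⁻¹ * s) (l⁻¹ • y) : ℝ → Rn n → ℝ)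
        = fun z : ℝ × Rn n => (l ^ (2 * α))⁻¹ *
            (Function.uncurry F) ((l ^ (2 * α))⁻¹ * z.1, l⁻¹ • z.2) := rfl
    rw [this]
    exact ((hmF.comp ((measurable_fst.const_mul _).prodMk
      (measurable_snd.const_smul (l⁻¹ : ℝ))))).const_mul _
  have hnnG : ∀ s y, (0:ℝ) ≤ (l ^ (2 * α))⁻¹ * F ((l ^ (2 * α))⁻¹ * s) (l⁻¹ • y) :=
    fun s y => mul_nonneg (inv_pos.2 hc).le (hnn _ _)
  have hSG : ∀ z ∈ pball n α 0 0 (l * ρ),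
      1 ≤ SopE n α (fun s y => (l ^ (2 * α))⁻¹ * F ((l ^ (2 * α))⁻¹ * s) (l⁻¹ • y)) z.1 z.2 := by
    rintro ⟨t, x⟩ hz
    obtain ⟨h1, h2, h3⟩ := hz
    rw [SopE_scale hl α F t x]
    refine hS ((l ^ (2 * α))⁻¹ * t, l⁻¹ • x) ?_
    simp only [sub_zero] at h2 h3
    rw [abs_of_pos h1] at h2
    have hmr : (l * ρ) ^ (2 * α) = l ^ (2 * α) * ρ ^ (2 * α) := Real.mul_rpow hl.le hρ.le
    refine ⟨mul_pos (inv_pos.2 hc) h1, ?_, ?_⟩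
    · rw [sub_zero, abs_of_pos (mul_pos (inv_pos.2 hc) h1)]
      have := mul_lt_mul_of_pos_left h2 (inv_pos.2 hc)
      rwa [hmr, inv_mul_cancel_left₀ hc.ne'] at this
    · rw [sub_zero, norm_smul, Real.norm_eq_abs, abs_of_pos (inv_pos.2 hl)]
      have := mul_lt_mul_of_pos_left h3 (inv_pos.2 hl)
      rwa [inv_mul_cancel_left₀ hl.ne'] at this
  calc capacity n α p q (pball n α 0 0 (l * ρ))
      ≤ mixedNorm n q p
          (fun s y => (l ^ (2 * α))⁻¹ * F ((l ^ (2 * α))⁻¹ * s) (l⁻¹ • y)) ^ min p q := by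
        refine iInf_le_of_le
          (fun s y => (l ^ (2 * α))⁻¹ * F ((l ^ (2 * α))⁻¹ * s) (l⁻¹ • y)) ?_
        refine iInf_le_of_le hmG ?_
        refine iInf_le_of_le hnnG ?_
        exact iInf_le _ hSG
    _ = mixedNorm n q p F ^ min p q * C := by
        rw [mixedNorm_scale hl α hp hq F,
          ENNReal.mul_rpow_of_nonneg _ _ hm.le,
          ENNReal.ofReal_rpow_of_pos (Real.rpow_pos_of_pos hl _), ← Real.rpow_mul hl.le,
          hCdef, mul_comm ((n : ℝ) / p + 2 * α / q - 2 * α) (min p q), mul_comm]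

/-- Exact scaling law for the capacity of parabolic balls centered at the origin. -/
theorem stmt17 (n : ℕ) (hn : 1 ≤ n) (α : ℝ) (hα : α ∈ Set.Ioo (0 : ℝ) 1)
    (p q : ℝ) (hp : 1 ≤ p) (hq : 1 ≤ q) (r : ℝ) (hr : 0 < r) :
    capacity n α p q (pball n α 0 0 r) =
      ENNReal.ofReal (r ^ (min p q * (n / p + 2 * α / q - 2 * α))) *
        capacity n α p q (pball n α 0 0 1) := by
  have h1 := cap_le (n := n) α hp hq hr one_pos
  rw [mul_one] at h1
  have h2 := cap_le (n := n) α hp hq (inv_pos.2 hr) hr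
  rw [inv_mul_cancel₀ hr.ne'] at h2
  refine le_antisymm h1 ?_
  calc ENNReal.ofReal (r ^ (min p q * ((n : ℝ) / p + 2 * α / q - 2 * α))) *
        capacity n α p q (pball n α 0 0 1)
      ≤ ENNReal.ofReal (r ^ (min p q * ((n : ℝ) / p + 2 * α / q - 2 * α))) *
          (ENNReal.ofReal (r⁻¹ ^ (min p q * ((n : ℝ) / p + 2 * α / q - 2 * α))) *
            capacity n α p q (pball n α 0 0 r)) := mul_le_mul_right h2 _
    _ = capacity n α p q (pball n α 0 0 r) := by
        rw [← mul_assoc, ← ENNReal.ofReal_mul (Real.rpow_pos_of_pos hr _).le,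
          ← Real.mul_rpow hr.le (inv_nonneg.2 hr.le), mul_inv_cancel₀ hr.ne',
          Real.one_rpow, ENNReal.ofReal_one, one_mul]
end
end
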